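/- Let Ω ⊆ ℂ be open and let u : Ω → ℝ and α, β : Ω → ℂ be smooth functions satisfying on Ω the structure equations: e^{2u} − ββ̄ = αᾱ; α_z̄ = 0; (1/2)ᾱ α_z + β̄ β_z − u_z e^{2u} = 0; and u_{zz̄} e^u |β|² − (1/4)|α_z|² e^u − |u_z|² e^u |α|² + (1/2)α_z u_z̄ e^u ᾱ + (1/2)(ᾱ)_z̄ u_z e^u α + 2|β|⁴ = 0. Then: (a) if α ≡ 0 on Ω, then u satisfies Liouville's equation u_{zz̄} + 2e^u = 0, so the Gauss curvature K := −e^{−u} u_{zz̄} of the metric 2e^u dz dz̄ is identically 2; (b) if β ≡ 0 on Ω, then α is nowhere vanishing, α_z = 2u_z α, and u_{zz̄} = 0, so K is identically 0. -/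

import Mathlib

/-!
If `α ≡ 0`, the first equation gives `|β|² = e^{2u}`, and the fourth collapses to
`(u_{zz̄} + 2e^u) e^{3u} = 0`.

If `β ≡ 0`, then `|α|² = e^{2u}` never vanishes and the third equation reads
`ᾱ (α_z - 2 u_z α) / 2 = 0`. By Cauchy–Riemann `α` is holomorphic, hence so is
`u_z = α' / (2α)`, and therefore `u_{zz̄} = 0`.
-/

open Complex ComplexConjugate

/-- Wirtinger derivative `g_z = (∂ₓg - i ∂_y g)/2`. -/
noncomputable def wderivZ (g : ℂ → ℂ) (w : ℂ) : ℂ :=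
  (fderiv ℝ g w 1 - Complex.I * fderiv ℝ g w Complex.I) / 2

/-- Wirtinger derivative `g_z̄ = (∂ₓg + i ∂_y g)/2`. -/
noncomputable def wderivZbar (g : ℂ → ℂ) (w : ℂ) : ℂ :=
  (fderiv ℝ g w 1 + Complex.I * fderiv ℝ g w Complex.I) / 2

open Filter Topology

section Wirtinger

variable {f g : ℂ → ℂ} {w : ℂ}

theorem Filter.EventuallyEq.wderivZ_eq (h : f =ᶠ[𝓝 w] g) : wderivZ f w = wderivZ g w := by
  rw [wderivZ, wderivZ, h.fderiv_eq]

theorem Filter.EventuallyEq.wderivZbar_eq (h : f =ᶠ[𝓝 w] g) :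
    wderivZbar f w = wderivZbar g w := by
  rw [wderivZbar, wderivZbar, h.fderiv_eq]

theorem wderivZ_const (c : ℂ) : wderivZ (fun _ => c) w = 0 := by
  simp [wderivZ]

theorem wderivZbar_const (c : ℂ) : wderivZbar (fun _ => c) w = 0 := by
  simp [wderivZbar]

theorem differentiableAt_complex_iff_wderivZbar_eq_zero :
    DifferentiableAt ℂ f w ↔ DifferentiableAt ℝ f w ∧ wderivZbar f w = 0 := by
  rw [differentiableAt_complex_iff_differentiableAt_real, wderivZbar, smul_eq_mul,
    div_eq_zero_iff, or_iff_left two_ne_zero]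
  refine and_congr_right fun _ => ⟨fun h => ?_, fun h => ?_⟩
  · rw [h]
    linear_combination fderiv ℝ f w 1 * I_mul_I
  · linear_combination (-I) * h + fderiv ℝ f w I * I_mul_I

theorem DifferentiableAt.wderivZbar_eq_zero (h : DifferentiableAt ℂ f w) : wderivZbar f w = 0 :=
  (differentiableAt_complex_iff_wderivZbar_eq_zero.mp h).2

theorem wderivZ_add_wderivZbar : wderivZ f w + wderivZbar f w = fderiv ℝ f w 1 := by
  rw [wderivZ, wderivZbar]
  ring

theorem DifferentiableAt.wderivZ_eq_deriv (h : DifferentiableAt ℂ f w) :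
    wderivZ f w = deriv f w := by
  rw [← add_zero (wderivZ f w), ← h.wderivZbar_eq_zero, wderivZ_add_wderivZbar,
    h.fderiv_restrictScalars ℝ, ContinuousLinearMap.coe_restrictScalars', fderiv_apply_one_eq_deriv]

theorem differentiableOn_complex_of_wderivZbar_eq_zero {Ω : Set ℂ} (hΩ : IsOpen Ω)
    (hf : DifferentiableOn ℝ f Ω) (h : ∀ w ∈ Ω, wderivZbar f w = 0) :
    DifferentiableOn ℂ f Ω := fun w hw =>
  (differentiableAt_complex_iff_wderivZbar_eq_zero.mpr
    ⟨hf.differentiableAt (hΩ.mem_nhds hw), h w hw⟩).differentiableWithinAt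

end Wirtinger

section StructureEquations

variable {Ω : Set ℂ} {u : ℂ → ℝ} {α β : ℂ → ℂ} {w : ℂ}

theorem liouville_of_alpha_eq_zero (hΩ : IsOpen Ω)
    (h1 : ∀ w ∈ Ω, (Real.exp (2 * u w) : ℂ) - β w * conj (β w) = α w * conj (α w))
    (h4 : ∀ w ∈ Ω,
      wderivZbar (fun z => wderivZ (fun z' => (u z' : ℂ)) z) w * (Real.exp (u w) : ℂ)
          * (‖β w‖ : ℂ) ^ 2
        - (1 / 4 : ℂ) * (‖wderivZ α w‖ : ℂ) ^ 2 * (Real.exp (u w) : ℂ)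
        - (‖wderivZ (fun z => (u z : ℂ)) w‖ : ℂ) ^ 2 * (Real.exp (u w) : ℂ)
          * (‖α w‖ : ℂ) ^ 2
        + (1 / 2 : ℂ) * wderivZ α w * wderivZbar (fun z => (u z : ℂ)) w
          * (Real.exp (u w) : ℂ) * conj (α w)
        + (1 / 2 : ℂ) * wderivZbar (fun z => conj (α z)) w * wderivZ (fun z => (u z : ℂ)) w
          * (Real.exp (u w) : ℂ) * α w
        + 2 * (‖β w‖ : ℂ) ^ 4 = 0)
    (hα0 : ∀ w ∈ Ω, α w = 0) (hw : w ∈ Ω) :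
    wderivZbar (fun z => wderivZ (fun z' => (u z' : ℂ)) z) w + 2 * (Real.exp (u w) : ℂ) = 0 := by
  have hα_nhds : α =ᶠ[𝓝 w] fun _ => 0 := eventuallyEq_of_mem (hΩ.mem_nhds hw) hα0
  have hαz : wderivZ α w = 0 := hα_nhds.wderivZ_eq.trans (wderivZ_const _)
  have hαbar_zbar : wderivZbar (fun z => conj (α z)) w = 0 :=
    (hα_nhds.fun_comp conj).wderivZbar_eq.trans (wderivZbar_const _)
  have hβ : (‖β w‖ : ℂ) ^ 2 = (Real.exp (u w) : ℂ) ^ 2 := by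
    have h1w := h1 w hw
    rw [hα0 w hw, zero_mul, sub_eq_zero, mul_conj, normSq_eq_norm_sq] at h1w
    rw [← ofReal_pow, ← ofReal_pow, ← h1w, ← Real.exp_nat_mul]
    norm_num
  have h4w := h4 w hw
  rw [hαz, hαbar_zbar, hα0 w hw, show (‖β w‖ : ℂ) ^ 4 = ((‖β w‖ : ℂ) ^ 2) ^ 2 by ring, hβ]
    at h4w
  simp only [norm_zero, ofReal_zero, map_zero] at h4w
  have hE : (Real.exp (u w) : ℂ) ^ 3 ≠ 0 := pow_ne_zero _ (ofReal_ne_zero.mpr (Real.exp_ne_zero _))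
  refine (mul_eq_zero.mp ?_).resolve_right hE
  linear_combination h4w

theorem alpha_mul_conj_eq_exp_of_beta_eq_zero
    (h1 : ∀ w ∈ Ω, (Real.exp (2 * u w) : ℂ) - β w * conj (β w) = α w * conj (α w))
    (hβ0 : ∀ w ∈ Ω, β w = 0) (hw : w ∈ Ω) :
    α w * conj (α w) = (Real.exp (2 * u w) : ℂ) := by
  simpa [hβ0 w hw] using (h1 w hw).symm

theorem alpha_ne_zero_of_beta_eq_zero
    (h1 : ∀ w ∈ Ω, (Real.exp (2 * u w) : ℂ) - β w * conj (β w) = α w * conj (α w))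
    (hβ0 : ∀ w ∈ Ω, β w = 0) (hw : w ∈ Ω) : α w ≠ 0 := by
  intro hα
  have hnorm := alpha_mul_conj_eq_exp_of_beta_eq_zero h1 hβ0 hw
  rw [hα, zero_mul, eq_comm, ofReal_eq_zero] at hnorm
  exact Real.exp_ne_zero _ hnorm

theorem wderivZ_alpha_eq_of_beta_eq_zero
    (h1 : ∀ w ∈ Ω, (Real.exp (2 * u w) : ℂ) - β w * conj (β w) = α w * conj (α w))
    (h3 : ∀ w ∈ Ω,
      (1 / 2 : ℂ) * conj (α w) * wderivZ α w + conj (β w) * wderivZ β w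
        - wderivZ (fun z => (u z : ℂ)) w * (Real.exp (2 * u w) : ℂ) = 0)
    (hβ0 : ∀ w ∈ Ω, β w = 0) (hw : w ∈ Ω) :
    wderivZ α w = 2 * wderivZ (fun z => (u z : ℂ)) w * α w := by
  refine mul_right_cancel₀ ((map_ne_zero conj).mpr (alpha_ne_zero_of_beta_eq_zero h1 hβ0 hw)) ?_
  have h3w := h3 w hw
  rw [hβ0 w hw, map_zero, zero_mul, add_zero,
    ← alpha_mul_conj_eq_exp_of_beta_eq_zero h1 hβ0 hw] at h3w
  linear_combination 2 * h3w

theorem wderivZbar_wderivZ_eq_zero_of_beta_eq_zero (hΩ : IsOpen Ω)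
    (hα : ContDiffOn ℝ (⊤ : ℕ∞) α Ω)
    (h1 : ∀ w ∈ Ω, (Real.exp (2 * u w) : ℂ) - β w * conj (β w) = α w * conj (α w))
    (h2 : ∀ w ∈ Ω, wderivZbar α w = 0)
    (h3 : ∀ w ∈ Ω,
      (1 / 2 : ℂ) * conj (α w) * wderivZ α w + conj (β w) * wderivZ β w
        - wderivZ (fun z => (u z : ℂ)) w * (Real.exp (2 * u w) : ℂ) = 0)
    (hβ0 : ∀ w ∈ Ω, β w = 0) (hw : w ∈ Ω) :
    wderivZbar (fun z => wderivZ (fun z' => (u z' : ℂ)) z) w = 0 := by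
  have hholo : DifferentiableOn ℂ α Ω :=
    differentiableOn_complex_of_wderivZbar_eq_zero hΩ (hα.differentiableOn (by simp)) h2
  have huz : (fun z => wderivZ (fun z' => (u z' : ℂ)) z) =ᶠ[𝓝 w]
      fun z => deriv α z / (2 * α z) := by
    refine eventually_of_mem (hΩ.mem_nhds hw) fun z hz => ?_
    have hα_ne := alpha_ne_zero_of_beta_eq_zero h1 hβ0 hz
    dsimp only
    rw [← (hholo.differentiableAt (hΩ.mem_nhds hz)).wderivZ_eq_deriv,
      wderivZ_alpha_eq_of_beta_eq_zero h1 h3 hβ0 hz]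
    field_simp
  rw [huz.wderivZbar_eq]
  refine DifferentiableAt.wderivZbar_eq_zero ?_
  exact ((hholo.deriv hΩ).differentiableAt (hΩ.mem_nhds hw)).div
    ((hholo.differentiableAt (hΩ.mem_nhds hw)).const_mul 2)
    (mul_ne_zero two_ne_zero (alpha_ne_zero_of_beta_eq_zero h1 hβ0 hw))

end StructureEquations

theorem stmt17_general (Ω : Set ℂ) (hΩ : IsOpen Ω)
    (u : ℂ → ℝ) (α β : ℂ → ℂ)
    (hα : ContDiffOn ℝ (⊤ : ℕ∞) α Ω)
    (h1 : ∀ w ∈ Ω, (Real.exp (2 * u w) : ℂ) - β w * conj (β w) = α w * conj (α w))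
    (h2 : ∀ w ∈ Ω, wderivZbar α w = 0)
    (h3 : ∀ w ∈ Ω,
      (1 / 2 : ℂ) * conj (α w) * wderivZ α w + conj (β w) * wderivZ β w
        - wderivZ (fun z => (u z : ℂ)) w * (Real.exp (2 * u w) : ℂ) = 0)
    (h4 : ∀ w ∈ Ω,
      wderivZbar (fun z => wderivZ (fun z' => (u z' : ℂ)) z) w * (Real.exp (u w) : ℂ)
          * (‖β w‖ : ℂ) ^ 2
        - (1 / 4 : ℂ) * (‖wderivZ α w‖ : ℂ) ^ 2 * (Real.exp (u w) : ℂ)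
        - (‖wderivZ (fun z => (u z : ℂ)) w‖ : ℂ) ^ 2 * (Real.exp (u w) : ℂ)
          * (‖α w‖ : ℂ) ^ 2
        + (1 / 2 : ℂ) * wderivZ α w * wderivZbar (fun z => (u z : ℂ)) w
          * (Real.exp (u w) : ℂ) * conj (α w)
        + (1 / 2 : ℂ) * wderivZbar (fun z => conj (α z)) w * wderivZ (fun z => (u z : ℂ)) w
          * (Real.exp (u w) : ℂ) * α w
        + 2 * (‖β w‖ : ℂ) ^ 4 = 0) :
    -- (a) the totally geodesic Lagrangian sphere: `α ≡ 0`
    ((∀ w ∈ Ω, α w = 0) → ∀ w ∈ Ω,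
      wderivZbar (fun z => wderivZ (fun z' => (u z' : ℂ)) z) w
          + 2 * (Real.exp (u w) : ℂ) = 0 ∧
      -(Real.exp (-u w) : ℂ) * wderivZbar (fun z => wderivZ (fun z' => (u z' : ℂ)) z) w = 2) ∧
    -- (b) the totally geodesic flat Lagrangian torus: `β ≡ 0`
    ((∀ w ∈ Ω, β w = 0) → ∀ w ∈ Ω,
      α w ≠ 0 ∧
      wderivZ α w = 2 * wderivZ (fun z => (u z : ℂ)) w * α w ∧
      wderivZbar (fun z => wderivZ (fun z' => (u z' : ℂ)) z) w = 0 ∧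
      -(Real.exp (-u w) : ℂ) * wderivZbar (fun z => wderivZ (fun z' => (u z' : ℂ)) z) w = 0) := by
  refine ⟨fun hα0 w hw => ?_, fun hβ0 w hw => ?_⟩
  · have hL := liouville_of_alpha_eq_zero hΩ h1 h4 hα0 hw
    have hexp : (Real.exp (-u w) : ℂ) * Real.exp (u w) = 1 := by
      rw [← ofReal_mul, ← Real.exp_add, neg_add_cancel, Real.exp_zero, ofReal_one]
    exact ⟨hL, by linear_combination -(Real.exp (-u w) : ℂ) * hL + 2 * hexp⟩
  · have hK := wderivZbar_wderivZ_eq_zero_of_beta_eq_zero hΩ hα h1 h2 h3 hβ0 hw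
    exact ⟨alpha_ne_zero_of_beta_eq_zero h1 hβ0 hw, wderivZ_alpha_eq_of_beta_eq_zero h1 h3 hβ0 hw,
      hK, by rw [hK, mul_zero]⟩

theorem stmt17 (Ω : Set ℂ) (hΩ : IsOpen Ω)
    (u : ℂ → ℝ) (α β : ℂ → ℂ)
    (hu : ContDiffOn ℝ (⊤ : ℕ∞) u Ω)
    (hα : ContDiffOn ℝ (⊤ : ℕ∞) α Ω)
    (hβ : ContDiffOn ℝ (⊤ : ℕ∞) β Ω)
    (h1 : ∀ w ∈ Ω, (Real.exp (2 * u w) : ℂ) - β w * conj (β w) = α w * conj (α w))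
    (h2 : ∀ w ∈ Ω, wderivZbar α w = 0)
    (h3 : ∀ w ∈ Ω,
      (1 / 2 : ℂ) * conj (α w) * wderivZ α w + conj (β w) * wderivZ β w
        - wderivZ (fun z => (u z : ℂ)) w * (Real.exp (2 * u w) : ℂ) = 0)
    (h4 : ∀ w ∈ Ω,
      wderivZbar (fun z => wderivZ (fun z' => (u z' : ℂ)) z) w * (Real.exp (u w) : ℂ)
          * (‖β w‖ : ℂ) ^ 2
        - (1 / 4 : ℂ) * (‖wderivZ α w‖ : ℂ) ^ 2 * (Real.exp (u w) : ℂ)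
        - (‖wderivZ (fun z => (u z : ℂ)) w‖ : ℂ) ^ 2 * (Real.exp (u w) : ℂ)
          * (‖α w‖ : ℂ) ^ 2
        + (1 / 2 : ℂ) * wderivZ α w * wderivZbar (fun z => (u z : ℂ)) w
          * (Real.exp (u w) : ℂ) * conj (α w)
        + (1 / 2 : ℂ) * wderivZbar (fun z => conj (α z)) w * wderivZ (fun z => (u z : ℂ)) w
          * (Real.exp (u w) : ℂ) * α w
        + 2 * (‖β w‖ : ℂ) ^ 4 = 0) :
    -- (a) the totally geodesic Lagrangian sphere: `α ≡ 0`
    ((∀ w ∈ Ω, α w = 0) → ∀ w ∈ Ω,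
      wderivZbar (fun z => wderivZ (fun z' => (u z' : ℂ)) z) w
          + 2 * (Real.exp (u w) : ℂ) = 0 ∧
      -(Real.exp (-u w) : ℂ) * wderivZbar (fun z => wderivZ (fun z' => (u z' : ℂ)) z) w = 2) ∧
    -- (b) the totally geodesic flat Lagrangian torus: `β ≡ 0`
    ((∀ w ∈ Ω, β w = 0) → ∀ w ∈ Ω,
      α w ≠ 0 ∧
      wderivZ α w = 2 * wderivZ (fun z => (u z : ℂ)) w * α w ∧
      wderivZbar (fun z => wderivZ (fun z' => (u z' : ℂ)) z) w = 0 ∧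
      -(Real.exp (-u w) : ℂ) * wderivZbar (fun z => wderivZ (fun z' => (u z' : ℂ)) z) w = 0) :=
  stmt17_general Ω hΩ u α β hα h1 h2 h3 h4
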